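/- arXiv:1612.06265 — 3 statements merged into one kernel-verified Lean document; each statement's English description precedes it below -/
import Mathlib

section
/- Under the assumptions of the pDCAe descent estimate, the sequence E_t := F(x^t) + (L/2)‖x^t - x^{t-1}‖² is nonincreasing, where {x^t} is generated by pDCAe with β_t ∈ [0,1) and x^{-1} = x^0. -/
open scoped RealInnerProductSpace

section aux
variable {E : Type*} [NormedAddCommGroup E] [InnerProductSpace ℝ E] [CompleteSpace E]

/-- derivative of the line curve -/
lemma curve_hasDerivAt (a b : E) (s : ℝ) :
    HasDerivAt (fun s : ℝ => s • (b - a) + a) (b - a) s := by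
  simpa using ((hasDerivAt_id s).smul_const (b - a)).add_const a

lemma comp_hasDerivAt {f : E → ℝ} {f' : E → E} (hdiff : ∀ x, HasGradientAt f (f' x) x)
    (a b : E) (s : ℝ) :
    HasDerivAt (fun s : ℝ => f (s • (b - a) + a)) ⟪f' (s • (b - a) + a), b - a⟫ s := by
  have h1 := (hdiff (s • (b - a) + a)).hasFDerivAt
  have := h1.comp_hasDerivAt s (curve_hasDerivAt a b s)
  simp [InnerProductSpace.toDual_apply_apply] at this
  exact this

/-- Lemma B: gradient inequality for convex functions -/
lemma grad_ineq {f : E → ℝ} {f' : E → E} (hconv : ConvexOn ℝ Set.univ f)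
    (hdiff : ∀ x, HasGradientAt f (f' x) x) (a b : E) :
    f a + ⟪f' a, b - a⟫ ≤ f b := by
  set g : ℝ → ℝ := fun s => f (s • (b - a) + a) with hg
  have hgconv : ConvexOn ℝ Set.univ g := by
    have := hconv.comp_affineMap (AffineMap.lineMap a b : ℝ →ᵃ[ℝ] E)
    have heq : g = f ∘ (AffineMap.lineMap a b : ℝ →ᵃ[ℝ] E) := by
      funext s; simp [g, AffineMap.lineMap_apply, Function.comp]
    rw [heq]
    simpa using this
  have hd : HasDerivAt g ⟪f' a, b - a⟫ 0 := by
    have := comp_hasDerivAt hdiff a b 0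
    simpa using this
  have := hgconv.le_slope_of_hasDerivAt (Set.mem_univ (0:ℝ)) (Set.mem_univ (1:ℝ))
    one_pos hd
  have hslope : slope g 0 1 = g 1 - g 0 := by simp [slope_def_field]
  rw [hslope] at this
  have hg1 : g 1 = f b := by simp [g]
  have hg0 : g 0 = f a := by simp [g]
  rw [hg1, hg0] at this
  linarith

/-- Lemma A: descent lemma -/
lemma descent_lemma {f : E → ℝ} {f' : E → E} {L : ℝ} (hL : 0 < L)
    (hdiff : ∀ x, HasGradientAt f (f' x) x) (hlip : LipschitzWith L.toNNReal f')
    (a b : E) :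
    f b ≤ f a + ⟪f' a, b - a⟫ + L / 2 * ‖b - a‖ ^ 2 := by
  set g : ℝ → ℝ := fun s => f (s • (b - a) + a) with hg
  set g' : ℝ → ℝ := fun s => ⟪f' (s • (b - a) + a), b - a⟫ with hg'
  have hcont : Continuous g' := by
    apply Continuous.inner
    · exact hlip.continuous.comp (by continuity)
    · exact continuous_const
  have hftc : ∫ s in (0:ℝ)..1, g' s = g 1 - g 0 :=
    intervalIntegral.integral_eq_sub_of_hasDerivAt
      (fun s _ => comp_hasDerivAt hdiff a b s) (hcont.intervalIntegrable 0 1)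
  have hbound : ∀ s ∈ Set.Icc (0:ℝ) 1,
      g' s ≤ ⟪f' a, b - a⟫ + (L * ‖b - a‖ ^ 2) * s := by
    intro s hs
    have h1 : g' s - ⟪f' a, b - a⟫ = ⟪f' (s • (b - a) + a) - f' a, b - a⟫ := by
      simp [g', inner_sub_left]
    have h2 : ⟪f' (s • (b - a) + a) - f' a, b - a⟫ ≤ ‖f' (s • (b - a) + a) - f' a‖ * ‖b - a‖ :=
      real_inner_le_norm _ _
    have h3 : ‖f' (s • (b - a) + a) - f' a‖ ≤ L * (s * ‖b - a‖) := by
      have := hlip.dist_le_mul (s • (b - a) + a) a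
      rw [Real.coe_toNNReal L hL.le] at this
      rw [← dist_eq_norm]
      calc dist (f' (s • (b - a) + a)) (f' a) ≤ L * dist (s • (b - a) + a) a := this
        _ = L * (s * ‖b - a‖) := by
            rw [dist_eq_norm]
            simp [norm_smul, abs_of_nonneg hs.1]
    nlinarith [norm_nonneg (b - a), hs.1]
  have hint : ∫ s in (0:ℝ)..1, (⟪f' a, b - a⟫ + (L * ‖b - a‖ ^ 2) * s) =
      ⟪f' a, b - a⟫ + L / 2 * ‖b - a‖ ^ 2 := by
    rw [intervalIntegral.integral_add intervalIntegrable_const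
      (intervalIntegral.intervalIntegrable_id.const_mul _)]
    rw [intervalIntegral.integral_const_mul, integral_id]
    simp; ring
  have hmono : ∫ s in (0:ℝ)..1, g' s ≤
      ∫ s in (0:ℝ)..1, (⟪f' a, b - a⟫ + (L * ‖b - a‖ ^ 2) * s) :=
    intervalIntegral.integral_mono_on zero_le_one (hcont.intervalIntegrable 0 1)
      ((continuous_const.add (continuous_const.mul continuous_id)).intervalIntegrable 0 1)
      hbound
  have hg1 : g 1 = f b := by simp [g]
  have hg0 : g 0 = f a := by simp [g]
  rw [hftc, hg1, hg0, hint] at hmono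
  linarith

/-- affine part is convex -/
lemma affine_convex (v : E) (C : ℝ) : ConvexOn ℝ Set.univ (fun z : E => ⟪v, z⟫ + C) := by
  refine ⟨convex_univ, ?_⟩
  intro z1 _ z2 _ a b ha hb hab
  simp only [smul_eq_mul, inner_add_right, real_inner_smul_right]
  have hC : a * C + b * C = C := by rw [← add_mul, hab, one_mul]
  linarith

lemma quad_diff_convex (c w u : E) (L : ℝ) :
    ConvexOn ℝ Set.univ (fun z : E => ⟪c, z⟫ + L / 2 * (‖z - w‖ ^ 2 - ‖z - u‖ ^ 2)) := by
  have hrw : ∀ z : E, ⟪c, z⟫ + L / 2 * (‖z - w‖ ^ 2 - ‖z - u‖ ^ 2) =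
      ⟪c + L • (u - w), z⟫ + L / 2 * (‖w‖ ^ 2 - ‖u‖ ^ 2) := by
    intro z
    rw [norm_sub_sq_real z w, norm_sub_sq_real z u]
    simp only [inner_add_left, real_inner_smul_left, inner_sub_left]
    rw [real_inner_comm u z, real_inner_comm w z]
    ring
  have heq : (fun z : E => ⟪c, z⟫ + L / 2 * (‖z - w‖ ^ 2 - ‖z - u‖ ^ 2)) =
      (fun z : E => ⟪c + L • (u - w), z⟫ + L / 2 * (‖w‖ ^ 2 - ‖u‖ ^ 2)) := funext hrw
  rw [heq]
  exact affine_convex _ _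
  
/-- Lemma C: convex minimizer with quadratic slack -/
lemma strong_min {g : E → ℝ} (hg : ConvexOn ℝ Set.univ g) {L : ℝ} (hL : 0 < L) {u : E}
    (h : ∀ z, g u ≤ g z + L / 2 * ‖z - u‖ ^ 2) : ∀ z, g u ≤ g z := by
  intro z
  apply le_of_forall_pos_le_add
  intro ε hε
  set K : ℝ := L / 2 * ‖z - u‖ ^ 2 with hK
  have hK0 : 0 ≤ K := by positivity
  set s : ℝ := min 1 (ε / (K + 1)) with hs
  have hs0 : 0 < s := lt_min one_pos (by positivity)
  have hs1 : s ≤ 1 := min_le_left _ _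
  have hzs := h (s • z + (1 - s) • u)
  have hnorm : ‖(s • z + (1 - s) • u) - u‖ ^ 2 = s ^ 2 * ‖z - u‖ ^ 2 := by
    have : (s • z + (1 - s) • u) - u = s • (z - u) := by
      module
    rw [this, norm_smul]
    simp [abs_of_nonneg hs0.le]
    ring
  have hconv := hg.2 (Set.mem_univ z) (Set.mem_univ u) hs0.le (by linarith : (0:ℝ) ≤ 1 - s)
    (by ring)
  simp only [smul_eq_mul] at hconv
  rw [hnorm] at hzs
  -- g u ≤ s * g z + (1-s) * g u + L/2 * s^2 * ‖z-u‖^2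
  have key : g u ≤ g z + s * K := by
    have h1 : g u ≤ s * g z + (1 - s) * g u + s ^ 2 * K := by
      calc g u ≤ g (s • z + (1 - s) • u) + L / 2 * (s ^ 2 * ‖z - u‖ ^ 2) := hzs
      _ ≤ s * g z + (1 - s) * g u + s ^ 2 * K := by
          have : L / 2 * (s ^ 2 * ‖z - u‖ ^ 2) = s ^ 2 * K := by rw [hK]; ring
          linarith [hconv]
    nlinarith [hs0]
  have hsK : s * K ≤ ε := by
    have h2 : s ≤ ε / (K + 1) := min_le_right _ _
    have h3 : s * K ≤ (ε / (K + 1)) * K := by nlinarith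
    have h4 : (ε / (K + 1)) * K ≤ ε := by
      rw [div_mul_eq_mul_div, div_le_iff₀ (by positivity)]
      nlinarith
    linarith
  linarith

end aux

/-- pDCAe: `x 0` plays the role of `x⁻¹`, `x (t+1)` of `x^t`. The quantity
`E_t = F(x^t) + (L/2)‖x^t - x^{t-1}‖²` is nonincreasing. -/
theorem stmt3 {n : ℕ} (L : ℝ) (hL : 0 < L)
    (f : EuclideanSpace ℝ (Fin n) → ℝ)
    (f' : EuclideanSpace ℝ (Fin n) → EuclideanSpace ℝ (Fin n))
    (hconv : ConvexOn ℝ Set.univ f)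
    (hdiff : ∀ x, HasGradientAt f (f' x) x)
    (hlip : LipschitzWith L.toNNReal f')
    (P₁ P₂ : EuclideanSpace ℝ (Fin n) → ℝ)
    (hP₁conv : ConvexOn ℝ Set.univ P₁) (hP₁lsc : LowerSemicontinuous P₁)
    (hP₂conv : ConvexOn ℝ Set.univ P₂) (hP₂cont : Continuous P₂)
    (x y ξ : ℕ → EuclideanSpace ℝ (Fin n)) (β : ℕ → ℝ)
    (hβ : ∀ t, β t ∈ Set.Ico (0 : ℝ) 1)
    (hinit : x 0 = x 1)
    (hξ : ∀ t z, P₂ (x (t+1)) + ⟪ξ t, z - x (t+1)⟫ ≤ P₂ z)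
    (hy : ∀ t, y t = x (t+1) + β t • (x (t+1) - x t))
    (hmin : ∀ t z, ⟪f' (y t) - ξ t, x (t+2)⟫ + L / 2 * ‖x (t+2) - y t‖ ^ 2 + P₁ (x (t+2)) ≤
      ⟪f' (y t) - ξ t, z⟫ + L / 2 * ‖z - y t‖ ^ 2 + P₁ z) :
    ∀ t, f (x (t+2)) + P₁ (x (t+2)) - P₂ (x (t+2)) + L / 2 * ‖x (t+2) - x (t+1)‖ ^ 2 ≤
      f (x (t+1)) + P₁ (x (t+1)) - P₂ (x (t+1)) + L / 2 * ‖x (t+1) - x t‖ ^ 2 := by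
  intro t
  set u := x (t+2) with hu
  set v := x (t+1) with hv
  set p := x t with hp
  set w := y t with hw
  set c := f' w - ξ t with hc
  -- improved minimality
  have hgconv : ConvexOn ℝ Set.univ
      (fun z => (⟪c, z⟫ + L / 2 * (‖z - w‖ ^ 2 - ‖z - u‖ ^ 2)) + P₁ z) :=
    (quad_diff_convex c w u L).add hP₁conv
  have hquad : ∀ z, (fun z => (⟪c, z⟫ + L / 2 * (‖z - w‖ ^ 2 - ‖z - u‖ ^ 2)) + P₁ z) u ≤
      (fun z => (⟪c, z⟫ + L / 2 * (‖z - w‖ ^ 2 - ‖z - u‖ ^ 2)) + P₁ z) z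
        + L / 2 * ‖z - u‖ ^ 2 := by
    intro z
    have := hmin t z
    simp only [← hu, ← hw, ← hc] at this
    simp only [sub_self, norm_zero]
    linarith
  have key := strong_min hgconv hL hquad v
  simp only [sub_self, norm_zero] at key
  rw [show ((0:ℝ))^2 = 0 by norm_num, sub_zero] at key
  -- key : ⟪c,u⟫ + L/2*(‖u-w‖^2 - 0^2) + P₁ u ≤ ⟪c,v⟫ + L/2*(‖v-w‖^2 - ‖v-u‖^2) + P₁ v
  have hdesc := descent_lemma hL hdiff hlip w u
  have hgrad := grad_ineq hconv hdiff w v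
  have hsub := hξ t u
  simp only [← hu, ← hv] at hsub
  -- inner product bookkeeping
  have e1 : ⟪c, u⟫ - ⟪c, v⟫ = ⟪f' w, u - w⟫ - ⟪f' w, v - w⟫ - ⟪ξ t, u - v⟫ := by
    simp only [hc, inner_sub_left, inner_sub_right]
    ring
  -- norm bookkeeping
  have e2 : ‖v - u‖ = ‖u - v‖ := norm_sub_rev _ _
  have e3 : ‖v - w‖ ^ 2 = (β t) ^ 2 * ‖v - p‖ ^ 2 := by
    have : v - w = -(β t • (v - p)) := by
      rw [hw, hy t, ← hv, ← hp]; abel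
    rw [this, norm_neg, norm_smul]
    simp [abs_of_nonneg (hβ t).1]
    ring
  have hβ2 : (β t) ^ 2 ≤ 1 := by
    have h1 := (hβ t).1; have h2 := (hβ t).2
    nlinarith
  have e4 : L / 2 * ‖v - w‖ ^ 2 ≤ L / 2 * ‖v - p‖ ^ 2 := by
    rw [e3]
    have h1 : 0 ≤ 1 - β t ^ 2 := by linarith
    nlinarith [mul_nonneg (mul_nonneg hL.le h1) (sq_nonneg ‖v - p‖)]
  have e5 : L / 2 * ‖v - u‖ ^ 2 = L / 2 * ‖u - v‖ ^ 2 := by rw [e2]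
  linarith [key, hdesc, hgrad, hsub, e1, e4, e5]
end

section
/- Let {x^t} be generated by pDCAe with β_t ∈ [0,1), sup_t β_t < 1, applied to a level-bounded F = f + P₁ - P₂ with infimum v > -∞. Then Σ_{t=0}^∞ (1 - β_t²)‖x^t - x^{t-1}‖² < ∞, and consequently ‖x^{t+1} - x^t‖ → 0. -/
/-!
Write `F = f + P₁ - P₂` and `E t = F (x^t) + L/2 ‖x^t - x^{t-1}‖²`. One pDCAe step lowers `E`
by at least `L/2 (1 - β_t²) ‖x^t - x^{t-1}‖²`: the descent lemma bounds `f (x^{t+1})` from `y^t`,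
the gradient inequality for `f` at `y^t` and the subgradient inequality for `P₂` at `x^t` compare
with `x^t`, and the `L`-strong convexity of the proximal subproblem yields the extra
`L/2 ‖x^{t+1} - x^t‖²`. Since `E ≥ v`, the decreases telescope to a finite sum, and because
`1 - β_t² ≥ 1 - (sup β)² > 0` the steps themselves tend to zero.
-/

open scoped RealInnerProductSpace
open Set Filter Topology
open scoped NNReal

section InnerProductSpace

variable {E : Type*} [NormedAddCommGroup E] [InnerProductSpace ℝ E]

theorem StrongConvexOn.add_sq_le_of_isMinOn {s : Set E} {m : ℝ} {φ : E → ℝ} {c b : E}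
    (hφ : StrongConvexOn s m φ) (hc : IsMinOn φ s c) (hcs : c ∈ s) (hbs : b ∈ s) :
    φ c + m / 2 * ‖b - c‖ ^ 2 ≤ φ b := by
  set K := m / 2 * ‖b - c‖ ^ 2
  have hseg : ∀ r ∈ Ioo (0 : ℝ) 1, φ c + (1 - r) * K ≤ φ b := by
    intro r ⟨hr0, hr1⟩
    have hr : 0 ≤ 1 - r := by linarith
    have hmin := isMinOn_iff.mp hc _ (hφ.1 hcs hbs hr hr0.le (sub_add_cancel 1 r))
    have hconv := hφ.2 hcs hbs hr hr0.le (sub_add_cancel 1 r)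
    rw [norm_sub_rev] at hconv
    simp only [smul_eq_mul] at hconv
    have : r * (φ c + (1 - r) * K) ≤ r * φ b := by linear_combination hmin + hconv
    exact le_of_mul_le_mul_left this hr0
  have hlim : Tendsto (fun r : ℝ => φ c + (1 - r) * K) (𝓝[>] 0) (𝓝 (φ c + K)) := by
    apply tendsto_nhdsWithin_of_tendsto_nhds
    exact (by fun_prop : Continuous fun r : ℝ => φ c + (1 - r) * K).tendsto' 0 _ (by simp)
  exact le_of_tendsto hlim <| eventually_of_mem (Ioo_mem_nhdsGT one_pos) hseg

theorem strongConvexOn_inner_add_sq_add {P : E → ℝ} (hP : ConvexOn ℝ univ P) (g y : E) (m : ℝ) :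
    StrongConvexOn univ m fun z => ⟪g, z⟫ + m / 2 * ‖z - y‖ ^ 2 + P z := by
  rw [strongConvexOn_iff_convex]
  have hsplit : (fun z => ⟪g, z⟫ + m / 2 * ‖z - y‖ ^ 2 + P z - m / 2 * ‖z‖ ^ 2) =
      fun z => P z + (innerₛₗ ℝ (g - m • y) z + m / 2 * ‖y‖ ^ 2) := by
    ext z
    rw [innerₛₗ_apply_apply, norm_sub_sq_real, inner_sub_left, real_inner_smul_left,
      real_inner_comm y]
    ring
  rw [hsplit]
  exact hP.add (((innerₛₗ ℝ (g - m • y)).convexOn convex_univ).add (convexOn_const _ convex_univ))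

variable [CompleteSpace E]

theorem HasGradientAt.hasDerivAt_comp_lineMap {f : E → ℝ} {g a b : E} {r : ℝ}
    (hf : HasGradientAt f g (a + r • (b - a))) :
    HasDerivAt (fun t : ℝ => f (a + t • (b - a))) ⟪g, b - a⟫ r := by
  have hline : HasDerivAt (fun t : ℝ => a + t • (b - a)) (b - a) r := by
    simpa using ((hasDerivAt_id r).smul_const (b - a)).const_add a
  exact hf.hasFDerivAt.comp_hasDerivAt r hline

theorem ConvexOn.add_inner_le_of_hasGradientAt {f : E → ℝ} {g a : E} (hf : ConvexOn ℝ univ f)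
    (hg : HasGradientAt f g a) (b : E) : f a + ⟪g, b - a⟫ ≤ f b := by
  have hline : ConvexOn ℝ univ fun t : ℝ => f (a + t • (b - a)) := by
    simpa [Function.comp_def, AffineMap.lineMap_apply, add_comm]
      using hf.comp_affineMap (AffineMap.lineMap a b)
  have hslope := hline.le_slope_of_hasDerivAt (mem_univ 0) (mem_univ 1) one_pos
    (HasGradientAt.hasDerivAt_comp_lineMap (by simpa using hg))
  simp only [slope_def_field, one_smul, add_sub_cancel, zero_smul, add_zero, sub_zero, div_one]
    at hslope
  linarith

theorem le_add_inner_add_sq_of_lipschitzWith_gradient {f : E → ℝ} {f' : E → E} {K : ℝ≥0}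
    (hf : ∀ z, HasGradientAt f (f' z) z) (hK : LipschitzWith K f') (a b : E) :
    f b ≤ f a + ⟪f' a, b - a⟫ + K / 2 * ‖b - a‖ ^ 2 := by
  set d := b - a
  have hderiv (r : ℝ) : HasDerivAt (fun t : ℝ => f (a + t • d)) ⟪f' (a + r • d), d⟫ r :=
    (hf _).hasDerivAt_comp_lineMap
  have hbound (r : ℝ) (hr : 0 ≤ r) :
      ⟪f' (a + r • d), d⟫ ≤ ⟪f' a, d⟫ + r * (K * ‖d‖ ^ 2) := by
    have hlip : ‖f' (a + r • d) - f' a‖ ≤ K * ‖r • d‖ := by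
      simpa [dist_eq_norm] using hK.dist_le_mul (a + r • d) a
    calc ⟪f' (a + r • d), d⟫ = ⟪f' a, d⟫ + ⟪f' (a + r • d) - f' a, d⟫ := by
          rw [inner_sub_left]; ring
      _ ≤ ⟪f' a, d⟫ + ‖f' (a + r • d) - f' a‖ * ‖d‖ := by gcongr; exact real_inner_le_norm _ _
      _ ≤ ⟪f' a, d⟫ + K * ‖r • d‖ * ‖d‖ := by gcongr
      _ = ⟪f' a, d⟫ + r * (K * ‖d‖ ^ 2) := by rw [norm_smul, Real.norm_of_nonneg hr]; ring
  have hquad (r : ℝ) : HasDerivAt (fun t : ℝ => f a + t * ⟪f' a, d⟫ + t ^ 2 * (K * ‖d‖ ^ 2 / 2))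
      (⟪f' a, d⟫ + r * (K * ‖d‖ ^ 2)) r := by
    have := (((hasDerivAt_id r).mul_const ⟪f' a, d⟫).const_add (f a)).add
      ((hasDerivAt_pow 2 r).mul_const (K * ‖d‖ ^ 2 / 2))
    exact this.congr_deriv (by norm_num; ring)
  have := image_le_of_deriv_right_le_deriv_boundary (a := 0) (b := 1)
    (fun r _ => (hderiv r).continuousAt.continuousWithinAt)
    (fun r _ => (hderiv r).hasDerivWithinAt) (by simp)
    (fun r _ => (hquad r).continuousAt.continuousWithinAt)
    (fun r _ => (hquad r).hasDerivWithinAt) (fun r hr => hbound r hr.1) (right_mem_Icc.2 zero_le_one)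
  simp only [one_smul, add_sub_cancel, one_mul, one_pow, d] at this
  linarith

theorem pdcae_step_decrease {f P₁ P₂ : E → ℝ} {f' : E → E} {L β : ℝ} {u w y z ξ : E}
    (hL : 0 ≤ L) (hf : ConvexOn ℝ univ f) (hgrad : ∀ p, HasGradientAt f (f' p) p)
    (hlip : LipschitzWith L.toNNReal f') (hP₁ : ConvexOn ℝ univ P₁)
    (hξ : ∀ p, P₂ w + ⟪ξ, p - w⟫ ≤ P₂ p) (hy : y = w + β • (w - u))
    (hz : IsMinOn (fun p => ⟪f' y - ξ, p⟫ + L / 2 * ‖p - y‖ ^ 2 + P₁ p) univ z) :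
    f z + P₁ z - P₂ z + L / 2 * ‖z - w‖ ^ 2 + L / 2 * (1 - β ^ 2) * ‖w - u‖ ^ 2 ≤
      f w + P₁ w - P₂ w + L / 2 * ‖w - u‖ ^ 2 := by
  have hprox := (strongConvexOn_inner_add_sq_add hP₁ (f' y - ξ) y L).add_sq_le_of_isMinOn
    hz (mem_univ z) (mem_univ w)
  have hdescent := le_add_inner_add_sq_of_lipschitzWith_gradient hgrad hlip y z
  rw [Real.coe_toNNReal L hL] at hdescent
  have hsupport := hf.add_inner_le_of_hasGradientAt (hgrad y) w
  have hsubgrad := hξ z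
  have hwy : ‖w - y‖ ^ 2 = β ^ 2 * ‖w - u‖ ^ 2 := by
    rw [hy, sub_add_cancel_left, norm_neg, norm_smul, mul_pow, Real.norm_eq_abs, sq_abs]
  rw [hwy, norm_sub_rev w z] at hprox
  simp only [inner_sub_left, inner_sub_right] at hprox hdescent hsupport hsubgrad
  linarith

end InnerProductSpace

theorem summable_of_mul_le_sub_succ {a E : ℕ → ℝ} {c v : ℝ} (hc : 0 < c) (ha : ∀ t, 0 ≤ a t)
    (hE : ∀ t, v ≤ E t) (hdecr : ∀ t, c * a t ≤ E t - E (t + 1)) : Summable a := by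
  refine summable_of_sum_range_le ha (c := (E 0 - v) / c) fun N => ?_
  rw [le_div_iff₀ hc, Finset.sum_mul]
  calc ∑ i ∈ Finset.range N, a i * c ≤ ∑ i ∈ Finset.range N, (E i - E (i + 1)) :=
        Finset.sum_le_sum fun i _ => by linarith [hdecr i]
    _ = E 0 - E N := Finset.sum_range_sub' E N
    _ ≤ E 0 - v := by linarith [hE N]

theorem tendsto_zero_of_summable_mul_sq {w d : ℕ → ℝ} {c : ℝ} (hc : 0 < c) (hw : ∀ t, c ≤ w t)
    (hsum : Summable fun t => w t * d t ^ 2) : Tendsto d atTop (𝓝 0) := by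
  have hsq : Summable fun t => d t ^ 2 := by
    refine (hsum.div_const c).of_nonneg_of_le (fun t => sq_nonneg _) fun t => ?_
    rw [le_div_iff₀ hc]
    nlinarith [hw t, sq_nonneg (d t)]
  have habs := hsq.tendsto_atTop_zero.sqrt
  simp only [Real.sqrt_sq_eq_abs, Real.sqrt_zero] at habs
  exact tendsto_zero_iff_abs_tendsto_zero d |>.mpr habs

theorem stmt5_general {n : ℕ} (L : ℝ) (hL : 0 < L)
    (f : EuclideanSpace ℝ (Fin n) → ℝ)
    (f' : EuclideanSpace ℝ (Fin n) → EuclideanSpace ℝ (Fin n))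
    (hconv : ConvexOn ℝ Set.univ f)
    (hdiff : ∀ x, HasGradientAt f (f' x) x)
    (hlip : LipschitzWith L.toNNReal f')
    (P₁ P₂ : EuclideanSpace ℝ (Fin n) → ℝ)
    (hP₁conv : ConvexOn ℝ Set.univ P₁)
    (v : ℝ) (hv : ∀ z, v ≤ f z + P₁ z - P₂ z)
    (x y ξ : ℕ → EuclideanSpace ℝ (Fin n)) (β : ℕ → ℝ)
    (hβ : ∀ t, β t ∈ Set.Ico (0 : ℝ) 1)
    (hsup : ∃ c < (1 : ℝ), ∀ t, β t ≤ c)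
    (hξ : ∀ t z, P₂ (x (t+1)) + ⟪ξ t, z - x (t+1)⟫ ≤ P₂ z)
    (hy : ∀ t, y t = x (t+1) + β t • (x (t+1) - x t))
    (hmin : ∀ t z, ⟪f' (y t) - ξ t, x (t+2)⟫ + L / 2 * ‖x (t+2) - y t‖ ^ 2 + P₁ (x (t+2)) ≤
      ⟪f' (y t) - ξ t, z⟫ + L / 2 * ‖z - y t‖ ^ 2 + P₁ z) :
    Summable (fun t => (1 - β t ^ 2) * ‖x (t+1) - x t‖ ^ 2) ∧
      Filter.Tendsto (fun t => ‖x (t+1) - x t‖) Filter.atTop (nhds 0) := by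
  obtain ⟨c, hc1, hβc⟩ := hsup
  have hc0 : 0 ≤ c := (hβ 0).1.trans (hβc 0)
  have hweight_pos : 0 < 1 - c ^ 2 := by nlinarith
  have hweight (t : ℕ) : 1 - c ^ 2 ≤ 1 - β t ^ 2 := by nlinarith [(hβ t).1, hβc t]
  set merit : ℕ → ℝ := fun t =>
    f (x (t+1)) + P₁ (x (t+1)) - P₂ (x (t+1)) + L / 2 * ‖x (t+1) - x t‖ ^ 2
  have hdecr (t : ℕ) :
      L / 2 * ((1 - β t ^ 2) * ‖x (t+1) - x t‖ ^ 2) ≤ merit t - merit (t + 1) := by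
    have := pdcae_step_decrease hL.le hconv hdiff hlip hP₁conv (hξ t) (hy t)
      (isMinOn_univ_iff.mpr (hmin t))
    simp only [merit]
    linarith
  have hsum : Summable fun t => (1 - β t ^ 2) * ‖x (t+1) - x t‖ ^ 2 :=
    summable_of_mul_le_sub_succ (by positivity)
      (fun t => mul_nonneg (hweight_pos.le.trans (hweight t)) (sq_nonneg _))
      (fun t => (hv _).trans (le_add_of_nonneg_right (by positivity))) hdecr
  exact ⟨hsum, tendsto_zero_of_summable_mul_sq hweight_pos hweight hsum⟩

/-- pDCAe: summability of `(1-β_t²)‖x^t - x^{t-1}‖²` and vanishing successive differences.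
Here `x 0` plays the role of `x⁻¹` and `x (t+1)` of `x^t`. -/
theorem stmt5 {n : ℕ} (L : ℝ) (hL : 0 < L)
    (f : EuclideanSpace ℝ (Fin n) → ℝ)
    (f' : EuclideanSpace ℝ (Fin n) → EuclideanSpace ℝ (Fin n))
    (hconv : ConvexOn ℝ Set.univ f)
    (hdiff : ∀ x, HasGradientAt f (f' x) x)
    (hlip : LipschitzWith L.toNNReal f')
    (P₁ P₂ : EuclideanSpace ℝ (Fin n) → ℝ)
    (hP₁conv : ConvexOn ℝ Set.univ P₁) (hP₁lsc : LowerSemicontinuous P₁)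
    (hP₂conv : ConvexOn ℝ Set.univ P₂) (hP₂cont : Continuous P₂)
    (hlevel : ∀ r : ℝ, Bornology.IsBounded {z | f z + P₁ z - P₂ z ≤ r})
    (v : ℝ) (hv : ∀ z, v ≤ f z + P₁ z - P₂ z)
    (x y ξ : ℕ → EuclideanSpace ℝ (Fin n)) (β : ℕ → ℝ)
    (hβ : ∀ t, β t ∈ Set.Ico (0 : ℝ) 1)
    (hsup : ∃ c < (1 : ℝ), ∀ t, β t ≤ c)
    (hinit : x 0 = x 1)
    (hξ : ∀ t z, P₂ (x (t+1)) + ⟪ξ t, z - x (t+1)⟫ ≤ P₂ z)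
    (hy : ∀ t, y t = x (t+1) + β t • (x (t+1) - x t))
    (hmin : ∀ t z, ⟪f' (y t) - ξ t, x (t+2)⟫ + L / 2 * ‖x (t+2) - y t‖ ^ 2 + P₁ (x (t+2)) ≤
      ⟪f' (y t) - ξ t, z⟫ + L / 2 * ‖z - y t‖ ^ 2 + P₁ z) :
    Summable (fun t => (1 - β t ^ 2) * ‖x (t+1) - x t‖ ^ 2) ∧
      Filter.Tendsto (fun t => ‖x (t+1) - x t‖) Filter.atTop (nhds 0) :=
  stmt5_general L hL f f' hconv hdiff hlip P₁ P₂ hP₁conv v hv x y ξ β hβ hsup hξ hy hmin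
end

section
/- For a > 0, the function P₂(x) = Σᵢ [ ((a+1)/a)|xᵢ| - (a+1)|xᵢ|/(a + |xᵢ|) ] is continuously differentiable on ℝⁿ and its gradient is Lipschitz continuous with modulus 2(a+1)/a². -/
/-!
Each summand is `ψ(|xᵢ|)` with `ψ(u) = (a+1)/a·u − (a+1)u/(a+u)`, whose derivative
`ψ'(u) = (a+1)/a − (a+1)a/(a+u)²` vanishes at `0`; so `s ↦ ψ(|s|)` is differentiable even at
the kink, with the odd derivative `sign s · ψ'(|s|)`. For `u, v ≥ 0` we have
`|ψ'(u) − ψ'(v)| = (a+1)a·|(a+v)⁻² − (a+u)⁻²| ≤ 2(a+1)/a²·|u − v|` since `a+u, a+v ≥ a`,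
and oddness extends this bound to all of `ℝ`. The gradient of `P₂` acts coordinatewise, so
it inherits the same Lipschitz constant for the Euclidean norm.
-/

open Set
open scoped NNReal

theorem HasDerivAt.comp_abs_of_deriv_zero {ψ : ℝ → ℝ} (h : HasDerivAt ψ 0 0) :
    HasDerivAt (fun s => ψ |s|) 0 0 := by
  rw [hasDerivAt_iff_isLittleO] at h ⊢
  have := h.comp_tendsto (continuous_abs.tendsto' 0 0 abs_zero)
  simp only [Function.comp_def, sub_zero, smul_zero] at this
  simpa using this.of_abs_right

theorem hasDerivAt_comp_abs {ψ ψ' : ℝ → ℝ} (hψ : ∀ u, 0 ≤ u → HasDerivAt ψ (ψ' u) u)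
    (h0 : ψ' 0 = 0) (s : ℝ) :
    HasDerivAt (fun s => ψ |s|) (SignType.sign s * ψ' |s|) s := by
  rcases eq_or_ne s 0 with rfl | hs
  · simpa [h0] using (h0 ▸ hψ 0 le_rfl).comp_abs_of_deriv_zero
  · rw [mul_comm]; exact (hψ |s| (abs_nonneg s)).comp s (hasDerivAt_abs hs)

theorem LipschitzOnWith.lipschitzWith_of_odd {f : ℝ → ℝ} {K : ℝ≥0}
    (hf : LipschitzOnWith K f (Ici 0)) (hodd : ∀ s, f (-s) = -f s) : LipschitzWith K f := by
  have hf0 : f 0 = 0 := by linarith [neg_zero (G := ℝ) ▸ hodd 0]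
  have hf' : ∀ s t, 0 ≤ s → 0 ≤ t → |f s - f t| ≤ K * |s - t| := fun s t hs ht =>
    hf.dist_le_mul s hs t ht
  refine LipschitzWith.of_dist_le_mul fun s t => ?_
  wlog hts : t ≤ s generalizing s t
  · rw [dist_comm, dist_comm s]; exact this t s (le_of_not_ge hts)
  simp only [Real.dist_eq]
  rcases le_total 0 t with ht | ht
  · exact hf' s t (ht.trans hts) ht
  rcases le_total s 0 with hs | hs
  · simpa [hodd, abs_sub_comm, sub_eq_add_neg, add_comm] using
      hf' (-t) (-s) (by linarith) (by linarith)
  · calc |f s - f t| ≤ |f s - f 0| + |f (-t) - f 0| := by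
          simpa [hf0, hodd] using abs_sub (f s) (f t)
      _ ≤ K * |s - 0| + K * |-t - 0| :=
          add_le_add (hf' s 0 hs le_rfl) (hf' (-t) 0 (by linarith) le_rfl)
      _ = K * |s - t| := by
          rw [sub_zero, sub_zero, abs_of_nonneg hs, abs_of_nonneg (neg_nonneg.2 ht),
            abs_of_nonneg (by linarith)]
          ring

theorem abs_inv_sq_sub_inv_sq_le {a p q : ℝ} (ha : 0 < a) (hp : a ≤ p) (hq : a ≤ q) :
    |(p ^ 2)⁻¹ - (q ^ 2)⁻¹| ≤ 2 / a ^ 3 * |p - q| := by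
  have hp₀ : 0 < p := ha.trans_le hp
  have hq₀ : 0 < q := ha.trans_le hq
  have hsplit : (p ^ 2)⁻¹ - (q ^ 2)⁻¹ = (q - p) * ((p * q ^ 2)⁻¹ + (p ^ 2 * q)⁻¹) := by
    field_simp; ring
  have h₁ : (p * q ^ 2)⁻¹ ≤ (a ^ 3)⁻¹ := by
    rw [pow_succ' a 2]; gcongr
  have h₂ : (p ^ 2 * q)⁻¹ ≤ (a ^ 3)⁻¹ := by
    rw [pow_succ a 2]; gcongr
  rw [hsplit, abs_mul, abs_sub_comm, abs_of_pos (a := _ + _) (by positivity), mul_comm]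
  gcongr
  linarith [show 2 / a ^ 3 = (a ^ 3)⁻¹ + (a ^ 3)⁻¹ by ring]

noncomputable def tl1Concave (a u : ℝ) : ℝ := (a + 1) / a * u - (a + 1) * u / (a + u)

noncomputable def tl1ConcaveDeriv (a u : ℝ) : ℝ := (a + 1) / a - (a + 1) * a / (a + u) ^ 2

theorem hasDerivAt_tl1Concave {a u : ℝ} (ha : a ≠ 0) (hu : a + u ≠ 0) :
    HasDerivAt (tl1Concave a) (tl1ConcaveDeriv a u) u := by
  have hquot :=
    ((hasDerivAt_id' u).const_mul (a + 1)).div ((hasDerivAt_id' u).const_add a) hu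
  refine (((hasDerivAt_id' u).const_mul ((a + 1) / a)).sub hquot).congr_deriv ?_
  rw [tl1ConcaveDeriv]
  field_simp
  ring

theorem tl1ConcaveDeriv_zero {a : ℝ} (ha : a ≠ 0) : tl1ConcaveDeriv a 0 = 0 := by
  rw [tl1ConcaveDeriv, add_zero]; field_simp; ring

theorem lipschitzOnWith_tl1ConcaveDeriv {a : ℝ} (ha : 0 < a) :
    LipschitzOnWith (2 * (a + 1) / a ^ 2).toNNReal (tl1ConcaveDeriv a) (Ici 0) := by
  refine LipschitzOnWith.of_dist_le_mul fun u hu v hv => ?_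
  rw [Real.coe_toNNReal _ (by positivity), Real.dist_eq, Real.dist_eq]
  have hu : a ≤ a + u := le_add_of_nonneg_right hu
  have hv : a ≤ a + v := le_add_of_nonneg_right hv
  calc |tl1ConcaveDeriv a u - tl1ConcaveDeriv a v|
      = (a + 1) * a * |((a + v) ^ 2)⁻¹ - ((a + u) ^ 2)⁻¹| := by
        rw [← abs_of_pos (show 0 < (a + 1) * a by positivity), ← abs_mul]
        simp only [tl1ConcaveDeriv]; congr 1; ring
    _ ≤ (a + 1) * a * (2 / a ^ 3 * |(a + v) - (a + u)|) := by
        gcongr; exact abs_inv_sq_sub_inv_sq_le ha hv hu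
    _ = 2 * (a + 1) / a ^ 2 * |u - v| := by
        rw [abs_sub_comm]; field_simp; ring_nf

noncomputable def tl1ConcaveGrad (a s : ℝ) : ℝ := SignType.sign s * tl1ConcaveDeriv a |s|

theorem hasDerivAt_tl1Concave_abs {a : ℝ} (ha : 0 < a) (s : ℝ) :
    HasDerivAt (fun s => tl1Concave a |s|) (tl1ConcaveGrad a s) s :=
  hasDerivAt_comp_abs (fun _ hu => hasDerivAt_tl1Concave ha.ne' (by positivity))
    (tl1ConcaveDeriv_zero ha.ne') s

theorem lipschitzWith_tl1ConcaveGrad {a : ℝ} (ha : 0 < a) :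
    LipschitzWith (2 * (a + 1) / a ^ 2).toNNReal (tl1ConcaveGrad a) := by
  have heq : EqOn (tl1ConcaveGrad a) (tl1ConcaveDeriv a) (Ici 0) := fun s (hs : 0 ≤ s) => by
    rcases hs.eq_or_lt with rfl | hs
    · simp [tl1ConcaveGrad, tl1ConcaveDeriv_zero ha.ne']
    · simp [tl1ConcaveGrad, hs, abs_of_pos hs]
  refine LipschitzOnWith.lipschitzWith_of_odd (fun s hs t ht => ?_) fun s => ?_
  · rw [heq hs, heq ht]; exact lipschitzOnWith_tl1ConcaveDeriv ha hs ht
  · simp [tl1ConcaveGrad, Left.sign_neg]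

theorem LipschitzWith.euclideanSpace_map {ι : Type*} [Fintype ι] {g : ℝ → ℝ} {K : ℝ≥0}
    (hg : LipschitzWith K g) :
    LipschitzWith K (fun x : EuclideanSpace ℝ ι => WithLp.toLp 2 fun i => g (x i)) := by
  refine LipschitzWith.of_dist_le_mul fun x y => ?_
  simp only [EuclideanSpace.dist_eq]
  calc √(∑ i, dist (g (x i)) (g (y i)) ^ 2)
      ≤ √(∑ i, (K * dist (x i) (y i)) ^ 2) := by
        gcongr with i; exact hg.dist_le_mul _ _
    _ = K * √(∑ i, dist (x i) (y i) ^ 2) := by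
        simp_rw [mul_pow, ← Finset.mul_sum]
        rw [Real.sqrt_mul (by positivity), Real.sqrt_sq K.coe_nonneg]

theorem hasGradientAt_sum_apply {ι : Type*} [Fintype ι] {φ g : ℝ → ℝ} {x : EuclideanSpace ℝ ι}
    (hφ : ∀ i, HasDerivAt φ (g (x i)) (x i)) :
    HasGradientAt (fun y : EuclideanSpace ℝ ι => ∑ i, φ (y i))
      (WithLp.toLp 2 fun i => g (x i)) x := by
  rw [hasGradientAt_iff_hasFDerivAt]
  have hcoord (i : ι) : HasFDerivAt (fun y : EuclideanSpace ℝ ι => φ (y i))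
      (g (x i) • EuclideanSpace.proj i) x :=
    (hφ i).comp_hasFDerivAt x (EuclideanSpace.proj (𝕜 := ℝ) i).hasFDerivAt
  refine (HasFDerivAt.fun_sum fun i _ => hcoord i).congr_fderiv ?_
  ext v
  simp [PiLp.inner_apply, mul_comm]

/-- The concave part of the transformed ℓ₁ regularizer is `C¹` with a Lipschitz
gradient with modulus `2(a+1)/a²`. -/
theorem stmt10 {n : ℕ} (a : ℝ) (ha : 0 < a)
    (P₂ : EuclideanSpace ℝ (Fin n) → ℝ)
    (hP₂ : ∀ x, P₂ x = ∑ i, ((a + 1) / a * |x i| - (a + 1) * |x i| / (a + |x i|))) :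
    ∃ G : EuclideanSpace ℝ (Fin n) → EuclideanSpace ℝ (Fin n),
      (∀ x, HasGradientAt P₂ (G x) x) ∧ Continuous G ∧
        LipschitzWith (2 * (a + 1) / a ^ 2).toNNReal G := by
  have hG := (lipschitzWith_tl1ConcaveGrad ha).euclideanSpace_map (ι := Fin n)
  refine ⟨_, fun x => ?_, hG.continuous, hG⟩
  rw [show P₂ = fun y => ∑ i, tl1Concave a |y i| from funext hP₂]
  exact hasGradientAt_sum_apply fun i => hasDerivAt_tl1Concave_abs ha (x i)
end
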